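/- With the action and coaction of Proposition 3.3, condition (d) holds: for all h,b ∈ H, Σ α(h₂₁₂) ⊗ (h₁·b)α²(S(h₂₁₁)α⁻¹(h₂₂)) = Σ h₁_(0) ⊗ α²(h₁_(1))(h₂·b), where h·b = (S(h₁)α⁻¹(b))α(h₂) and ρ(h)=h_(0)⊗h_(1)=α(h₁₂)⊗S(h₁₁)α⁻¹(h₂). -/
import Mathlib


open TensorProduct LinearMap

/-- A unital monoidal Hom-associative algebra. -/
structure HomAlg (k : Type*) [Field k] (A : Type*) [AddCommGroup A] [Module k A] where
  au : A ≃ₗ[k] A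
  mul : A →ₗ[k] A →ₗ[k] A
  one : A
  hom_assoc : ∀ x y z : A, mul (au x) (mul y z) = mul (mul x y) (au z)
  one_mul' : ∀ x : A, mul one x = au x
  mul_one' : ∀ x : A, mul x one = au x
  au_mul : ∀ x y : A, au (mul x y) = mul (au x) (au y)
  au_one : au one = one

/-- A counital monoidal Hom-coassociative coalgebra. -/
structure HomCoalg (k : Type*) [Field k] (C : Type*) [AddCommGroup C] [Module k C] where
  au : C ≃ₗ[k] C
  comul : C →ₗ[k] C ⊗[k] C
  counit : C →ₗ[k] k
  hom_coassoc : (TensorProduct.map au.symm.toLinearMap comul) ∘ₗ comul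
    = (TensorProduct.assoc k C C C).toLinearMap ∘ₗ (TensorProduct.map comul au.symm.toLinearMap) ∘ₗ comul
  counit_comul : ∀ c : C,
    (TensorProduct.lid k C) ((TensorProduct.map counit LinearMap.id) (comul c)) = au.symm c
  comul_counit : ∀ c : C,
    (TensorProduct.rid k C) ((TensorProduct.map LinearMap.id counit) (comul c)) = au.symm c
  comul_au : ∀ c : C, comul (au c) = (TensorProduct.map au.toLinearMap au.toLinearMap) (comul c)
  counit_au : ∀ c : C, counit (au c) = counit c

/-- A monoidal Hom-bialgebra. -/
structure HomBialg (k : Type*) [Field k] (H : Type*) [AddCommGroup H] [Module k H]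
    extends HomAlg k H, HomCoalg k H where
  comul_mul : ∀ x y : H, comul (mul x y)
    = (TensorProduct.map (TensorProduct.lift mul) (TensorProduct.lift mul))
        ((TensorProduct.tensorTensorTensorComm k H H H H) (comul x ⊗ₜ[k] comul y))
  comul_one : comul one = one ⊗ₜ[k] one
  counit_mul : ∀ x y : H, counit (mul x y) = counit x * counit y
  counit_one : counit one = 1

/-- A monoidal Hom-Hopf algebra. -/
structure HomHopf (k : Type*) [Field k] (H : Type*) [AddCommGroup H] [Module k H]
    extends HomBialg k H where
  S : H →ₗ[k] H
  S_au : S ∘ₗ au.toLinearMap = au.toLinearMap ∘ₗ S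
  S_mul_id : ∀ x : H,
    TensorProduct.lift mul ((TensorProduct.map S LinearMap.id) (comul x)) = counit x • one
  id_mul_S : ∀ x : H,
    TensorProduct.lift mul ((TensorProduct.map LinearMap.id S) (comul x)) = counit x • one

/-- The Hom-smash coproduct comultiplication on `B ⊗ H`:
`Δ(a # h) = Σ a₁ # α(h₁₍₀₎) ⊗ β⁻¹(a₂)·h₁₍₁₎ # h₂`. -/
noncomputable def smashComul {k : Type*} [Field k] {B H : Type*}
    [AddCommGroup B] [Module k B] [AddCommGroup H] [Module k H]
    (βB : B ≃ₗ[k] B) (mulB : B →ₗ[k] B →ₗ[k] B) (comulB : B →ₗ[k] B ⊗[k] B)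
    (αH : H ≃ₗ[k] H) (comulH : H →ₗ[k] H ⊗[k] H) (ρ : H →ₗ[k] H ⊗[k] B) :
    B ⊗[k] H →ₗ[k] (B ⊗[k] H) ⊗[k] (B ⊗[k] H) :=
  (TensorProduct.map
      (LinearMap.lTensor B αH.toLinearMap)
      ((LinearMap.rTensor H (TensorProduct.lift (mulB ∘ₗ βB.symm.toLinearMap)))
        ∘ₗ (TensorProduct.assoc k B B H).symm.toLinearMap))
  ∘ₗ (TensorProduct.tensorTensorTensorComm k B B H (B ⊗[k] H)).toLinearMap
  ∘ₗ (LinearMap.lTensor (B ⊗[k] B)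
        ((TensorProduct.assoc k H B H).toLinearMap ∘ₗ (LinearMap.rTensor H ρ)))
  ∘ₗ (TensorProduct.map comulB comulH)

/-- The Hom-smash counit `ε(a # h) = ε_B(a) ε_H(h)` on `B ⊗ H`. -/
noncomputable def smashCounit {k : Type*} [Field k] {B H : Type*}
    [AddCommGroup B] [Module k B] [AddCommGroup H] [Module k H]
    (counitB : B →ₗ[k] k) (counitH : H →ₗ[k] k) : B ⊗[k] H →ₗ[k] k :=
  (LinearMap.mul' k k) ∘ₗ (TensorProduct.map counitB counitH)

section Bicross

variable {k : Type*} [Field k] {B H : Type*}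
  [AddCommGroup B] [Module k B] [AddCommGroup H] [Module k H]

/-- The Hom-smash product multiplication on `B ⊗ H` (as a map on the tensor square):
`(a # h)(b # g) = Σ a(h₁ · β⁻¹(b)) # α(h₂)g`. -/
noncomputable def smashMulT
    (βB : B ≃ₗ[k] B) (mulB : B →ₗ[k] B →ₗ[k] B)
    (αH : H ≃ₗ[k] H) (mulH : H →ₗ[k] H →ₗ[k] H) (comulH : H →ₗ[k] H ⊗[k] H)
    (act : H →ₗ[k] B →ₗ[k] B) :
    (B ⊗[k] H) ⊗[k] (B ⊗[k] H) →ₗ[k] B ⊗[k] H :=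
  (TensorProduct.map
      ((TensorProduct.lift mulB)
        ∘ₗ (LinearMap.lTensor B ((TensorProduct.lift act) ∘ₗ (LinearMap.lTensor H βB.symm.toLinearMap)))
        ∘ₗ (TensorProduct.assoc k B H B).toLinearMap)
      (TensorProduct.lift (mulH ∘ₗ αH.toLinearMap)))
  ∘ₗ (TensorProduct.tensorTensorTensorComm k (B ⊗[k] H) H B H).toLinearMap
  ∘ₗ (LinearMap.rTensor (B ⊗[k] H)
        ((TensorProduct.assoc k B H H).symm.toLinearMap ∘ₗ (LinearMap.lTensor B comulH)))

/-- Bicrossproduct condition (a):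
`Δ_B(h·b) = Σ α(h₁₍₀₎)·b₁ ⊗ β(h₁₍₁₎)(α⁻¹(h₂)·β⁻¹(b₂))`. -/
noncomputable def bicrossCondA
    (βB : B ≃ₗ[k] B) (mulB : B →ₗ[k] B →ₗ[k] B) (comulB : B →ₗ[k] B ⊗[k] B)
    (αH : H ≃ₗ[k] H) (comulH : H →ₗ[k] H ⊗[k] H)
    (act : H →ₗ[k] B →ₗ[k] B) (ρ : H →ₗ[k] H ⊗[k] B) : Prop :=
  ∀ (h : H) (b : B), comulB (act h b)
    = ((LinearMap.lTensor B (TensorProduct.lift mulB))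
        ∘ₗ (TensorProduct.assoc k B B B).toLinearMap
        ∘ₗ (TensorProduct.map
             ((TensorProduct.map (TensorProduct.lift (act ∘ₗ αH.toLinearMap)) βB.toLinearMap)
               ∘ₗ (TensorProduct.assoc k H B B).symm.toLinearMap
               ∘ₗ (LinearMap.lTensor H (TensorProduct.comm k B B).toLinearMap)
               ∘ₗ (TensorProduct.assoc k H B B).toLinearMap
               ∘ₗ (LinearMap.rTensor B ρ))
             ((TensorProduct.lift act)
               ∘ₗ (TensorProduct.map αH.symm.toLinearMap βB.symm.toLinearMap)))
        ∘ₗ (TensorProduct.tensorTensorTensorComm k H H B B).toLinearMap)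
      (comulH h ⊗ₜ[k] comulB b)

/-- Bicrossproduct condition (d):
`Σ h₂₍₀₎ ⊗ (h₁·b)β²(h₂₍₁₎) = Σ h₁₍₀₎ ⊗ β²(h₁₍₁₎)(h₂·b)`. -/
noncomputable def bicrossCondD
    (βB : B ≃ₗ[k] B) (mulB : B →ₗ[k] B →ₗ[k] B)
    (αH : H ≃ₗ[k] H) (comulH : H →ₗ[k] H ⊗[k] H)
    (act : H →ₗ[k] B →ₗ[k] B) (ρ : H →ₗ[k] H ⊗[k] B) : Prop :=
  ∀ (h : H) (b : B),
    ((LinearMap.lTensor H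
        ((TensorProduct.lift (mulB ∘ₗ act.flip b))
          ∘ₗ (LinearMap.lTensor H (βB.toLinearMap ∘ₗ βB.toLinearMap))))
      ∘ₗ (TensorProduct.assoc k H H B).toLinearMap
      ∘ₗ (LinearMap.rTensor B (TensorProduct.comm k H H).toLinearMap)
      ∘ₗ (TensorProduct.assoc k H H B).symm.toLinearMap
      ∘ₗ (LinearMap.lTensor H ρ)) (comulH h)
    = ((LinearMap.lTensor H
          ((TensorProduct.lift (mulB ∘ₗ (βB.toLinearMap ∘ₗ βB.toLinearMap)))
            ∘ₗ (LinearMap.lTensor B (act.flip b))))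
        ∘ₗ (TensorProduct.assoc k H B H).toLinearMap
        ∘ₗ (LinearMap.rTensor H ρ)) (comulH h)

/-- Bicrossproduct condition (e):
`ρ(hg) = Σ α(h₁₍₀₎)g₍₀₎ ⊗ β(h₁₍₁₎)(α⁻¹(h₂)·β⁻¹(g₍₁₎))`.
The multiplications of `H` used on the two sides are passed separately (`mulH'`, `mulH`),
so that the same formula covers the opposite-algebra case. -/
noncomputable def bicrossCondE
    (βB : B ≃ₗ[k] B) (mulB : B →ₗ[k] B →ₗ[k] B)
    (αH : H ≃ₗ[k] H) (mulH : H →ₗ[k] H →ₗ[k] H) (comulH : H →ₗ[k] H ⊗[k] H)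
    (act : H →ₗ[k] B →ₗ[k] B) (ρ : H →ₗ[k] H ⊗[k] B) : Prop :=
  ∀ (h g : H), ρ (mulH h g)
    = ((LinearMap.lTensor H (TensorProduct.lift mulB))
        ∘ₗ (TensorProduct.assoc k H B B).toLinearMap
        ∘ₗ (TensorProduct.map
              ((TensorProduct.map (TensorProduct.lift (mulH ∘ₗ αH.toLinearMap)) βB.toLinearMap)
                ∘ₗ (TensorProduct.assoc k H H B).symm.toLinearMap
                ∘ₗ (LinearMap.lTensor H (TensorProduct.comm k B H).toLinearMap)
                ∘ₗ (TensorProduct.assoc k H B H).toLinearMap)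
              ((TensorProduct.lift act)
                ∘ₗ (TensorProduct.map αH.symm.toLinearMap βB.symm.toLinearMap)))
        ∘ₗ (TensorProduct.tensorTensorTensorComm k (H ⊗[k] B) H H B).toLinearMap
        ∘ₗ (LinearMap.rTensor (H ⊗[k] B) (LinearMap.rTensor H ρ)))
      (comulH h ⊗ₜ[k] ρ g)

end Bicross
section Adjoint

variable {k : Type*} [Field k] {H : Type*} [AddCommGroup H] [Module k H]

/-- The action `h · a = Σ (S(h₁)α⁻¹(a))α(h₂)` of `H^op` on `H` (tensor form). -/
noncomputable def adActT (αH : H ≃ₗ[k] H) (mul : H →ₗ[k] H →ₗ[k] H)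
    (comul : H →ₗ[k] H ⊗[k] H) (S : H →ₗ[k] H) : H ⊗[k] H →ₗ[k] H :=
  (TensorProduct.lift mul)
  ∘ₗ (TensorProduct.map
        ((TensorProduct.lift (mul ∘ₗ S)) ∘ₗ (LinearMap.lTensor H αH.symm.toLinearMap))
        αH.toLinearMap)
  ∘ₗ (TensorProduct.assoc k H H H).symm.toLinearMap
  ∘ₗ (LinearMap.lTensor H (TensorProduct.comm k H H).toLinearMap)
  ∘ₗ (TensorProduct.assoc k H H H).toLinearMap
  ∘ₗ (LinearMap.rTensor H comul)

/-- The action `h · a = Σ (S(h₁)α⁻¹(a))α(h₂)` of `H^op` on `H` (curried form). -/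
noncomputable def adAct (αH : H ≃ₗ[k] H) (mul : H →ₗ[k] H →ₗ[k] H)
    (comul : H →ₗ[k] H ⊗[k] H) (S : H →ₗ[k] H) : H →ₗ[k] H →ₗ[k] H :=
  TensorProduct.curry (adActT αH mul comul S)

/-- The coaction `ρ(h) = Σ α(h₁₂) ⊗ S(h₁₁)α⁻¹(h₂)` of `H` on `H^op`. -/
noncomputable def adCoact (αH : H ≃ₗ[k] H) (mul : H →ₗ[k] H →ₗ[k] H)
    (comul : H →ₗ[k] H ⊗[k] H) (S : H →ₗ[k] H) : H →ₗ[k] H ⊗[k] H :=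
  (TensorProduct.map αH.toLinearMap
      ((TensorProduct.lift (mul ∘ₗ S)) ∘ₗ (LinearMap.lTensor H αH.symm.toLinearMap)))
  ∘ₗ (TensorProduct.assoc k H H H).toLinearMap
  ∘ₗ (LinearMap.rTensor H (TensorProduct.comm k H H).toLinearMap)
  ∘ₗ (LinearMap.rTensor H comul)
  ∘ₗ comul

end Adjoint
set_option maxRecDepth 8000

section AdjProofAux

variable {k : Type*} [Field k] {H : Type*} [AddCommGroup H] [Module k H]

namespace HomHopf

variable (Hh : HomHopf k H)

/-- `α` as a linear map. -/
noncomputable def A : H →ₗ[k] H := Hh.au.toLinearMap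
/-- `α⁻¹` as a linear map. -/
noncomputable def A' : H →ₗ[k] H := Hh.au.symm.toLinearMap
/-- multiplication on the tensor square -/
noncomputable def mu : H ⊗[k] H →ₗ[k] H := TensorProduct.lift Hh.mul

@[simp] lemma A_apply (x : H) : Hh.A x = Hh.au x := rfl
@[simp] lemma A'_apply (x : H) : Hh.A' x = Hh.au.symm x := rfl
@[simp] lemma mu_tmul (x y : H) : Hh.mu (x ⊗ₜ[k] y) = Hh.mul x y := rfl

@[simp] lemma S_au_apply (x : H) : Hh.S (Hh.au x) = Hh.au (Hh.S x) := by
  have := LinearMap.congr_fun Hh.S_au x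
  simpa using this

@[simp] lemma S_auS_apply (x : H) : Hh.S (Hh.au.symm x) = Hh.au.symm (Hh.S x) := by
  have := Hh.S_au_apply (Hh.au.symm x)
  simp only [LinearEquiv.apply_symm_apply] at this
  rw [this, LinearEquiv.symm_apply_apply]

lemma auS_mul (x y : H) : Hh.au.symm (Hh.mul x y)
    = Hh.mul (Hh.au.symm x) (Hh.au.symm y) := by
  have := Hh.au_mul (Hh.au.symm x) (Hh.au.symm y)
  simp only [LinearEquiv.apply_symm_apply] at this
  rw [← this, LinearEquiv.symm_apply_apply]

lemma auS_one : Hh.au.symm Hh.one = Hh.one := by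
  conv_lhs => rw [← Hh.au_one]
  rw [LinearEquiv.symm_apply_apply]

/-- comultiplication commutes with `α⁻¹` -/
lemma comul_auS (c : H) :
    Hh.comul (Hh.au.symm c) = (map Hh.A' Hh.A') (Hh.comul c) := by
  have h1 := Hh.comul_au (Hh.au.symm c)
  rw [LinearEquiv.apply_symm_apply] at h1
  rw [h1]
  generalize Hh.comul (Hh.au.symm c) = t
  induction t using TensorProduct.induction_on with
  | zero => simp
  | tmul p q =>
      simp only [map_tmul, A_apply, A'_apply, LinearEquiv.symm_apply_apply,
        LinearEquiv.coe_coe]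
  | add u v hu hv => rw [map_add, map_add, ← hu, ← hv]

/-- coassociativity, pointwise -/
lemma coassoc_pt (x : H) :
    (map Hh.au.symm.toLinearMap Hh.comul) (Hh.comul x)
      = (TensorProduct.assoc k H H H) ((map Hh.comul Hh.au.symm.toLinearMap) (Hh.comul x)) := by
  have := LinearMap.congr_fun Hh.hom_coassoc x
  simpa using this

/-- `Σ h₁ ⊗ Δ h₂ = Σ α(h₁₁) ⊗ h₁₂ ⊗ α⁻¹(h₂)` -/
lemma coassocL (y : H) :
    (lTensor H Hh.comul) (Hh.comul y)
      = (map Hh.A LinearMap.id) ((TensorProduct.assoc k H H H)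
          ((map LinearMap.id Hh.A') ((rTensor H Hh.comul) (Hh.comul y)))) := by
  have h1 : (lTensor H Hh.comul) (Hh.comul y)
      = (map Hh.A LinearMap.id) ((map Hh.au.symm.toLinearMap Hh.comul) (Hh.comul y)) := by
    generalize Hh.comul y = t
    induction t using TensorProduct.induction_on with
    | zero => simp
    | tmul p q => simp
    | add u v hu hv => simp [hu, hv]
  have h2 : (TensorProduct.assoc k H H H) ((map Hh.comul Hh.au.symm.toLinearMap) (Hh.comul y))
      = (TensorProduct.assoc k H H H)
          ((map LinearMap.id Hh.A') ((rTensor H Hh.comul) (Hh.comul y))) := by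
    congr 1
    generalize Hh.comul y = t
    induction t using TensorProduct.induction_on with
    | zero => simp
    | tmul p q => simp [rTensor_tmul]
    | add u v hu hv => simp [hu, hv]
  rw [h1, Hh.coassoc_pt, h2]

/-- `Σ Δ h₁ ⊗ h₂ = Σ α⁻¹(h₁) ⊗ h₂₁ ⊗ α(h₂₂)` -/
lemma coassocR (x : H) :
    (rTensor H Hh.comul) (Hh.comul x)
      = (map LinearMap.id Hh.A) ((TensorProduct.assoc k H H H).symm
          ((map Hh.A' LinearMap.id) ((lTensor H Hh.comul) (Hh.comul x)))) := by
  have h1 : (map Hh.A' LinearMap.id) ((lTensor H Hh.comul) (Hh.comul x))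
      = (map Hh.au.symm.toLinearMap Hh.comul) (Hh.comul x) := by
    generalize Hh.comul x = t
    induction t using TensorProduct.induction_on with
    | zero => simp
    | tmul p q => simp
    | add u v hu hv => simp [hu, hv]
  rw [h1, Hh.coassoc_pt, LinearEquiv.symm_apply_apply]
  generalize Hh.comul x = t
  induction t using TensorProduct.induction_on with
  | zero => simp
  | tmul p q => simp
  | add u v hu hv => simp [hu, hv]

end HomHopf

end AdjProofAux
section AdjProofAux2

variable {k : Type*} [Field k] {H : Type*} [AddCommGroup H] [Module k H]

/-- `((p⊗q)⊗r) ↦ q⊗(p⊗r)` -/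
noncomputable def adjTau : (H ⊗[k] H) ⊗[k] H →ₗ[k] H ⊗[k] (H ⊗[k] H) :=
  (TensorProduct.assoc k H H H).toLinearMap
    ∘ₗ (rTensor H (TensorProduct.comm k H H).toLinearMap)

@[simp] lemma adjTau_tmul (p q r : H) :
    adjTau ((p ⊗ₜ[k] q) ⊗ₜ[k] r) = q ⊗ₜ[k] (p ⊗ₜ[k] r) := by
  simp [adjTau]

/-- `p⊗(q⊗r) ↦ q⊗(p⊗r)` -/
noncomputable def adjSw12 : H ⊗[k] (H ⊗[k] H) →ₗ[k] H ⊗[k] (H ⊗[k] H) :=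
  (TensorProduct.assoc k H H H).toLinearMap
    ∘ₗ (rTensor H (TensorProduct.comm k H H).toLinearMap)
    ∘ₗ (TensorProduct.assoc k H H H).symm.toLinearMap

@[simp] lemma adjSw12_tmul (p q r : H) :
    adjSw12 (p ⊗ₜ[k] (q ⊗ₜ[k] r)) = q ⊗ₜ[k] (p ⊗ₜ[k] r) := by
  simp [adjSw12]

namespace HomHopf

variable (Hh : HomHopf k H)

/-- `p⊗(q⊗r) ↦ q ⊗ pr` -/
noncomputable def sw : H ⊗[k] (H ⊗[k] H) →ₗ[k] H ⊗[k] H :=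
  (lTensor H Hh.mu) ∘ₗ adjSw12

@[simp] lemma sw_tmul (p q r : H) :
    Hh.sw (p ⊗ₜ[k] (q ⊗ₜ[k] r)) = q ⊗ₜ[k] Hh.mul p r := by
  simp [sw]

variable (b : H)

noncomputable def PhiL0 : (H ⊗[k] H) ⊗[k] ((H ⊗[k] H) ⊗[k] H) →ₗ[k] H ⊗[k] H :=
  Hh.sw ∘ₗ TensorProduct.map
    (Hh.mu ∘ₗ TensorProduct.map (Hh.mul.flip (Hh.au.symm b) ∘ₗ Hh.S) Hh.A)
    ((TensorProduct.map Hh.A (Hh.mu ∘ₗ TensorProduct.map (Hh.A ∘ₗ Hh.A ∘ₗ Hh.S) Hh.A)) ∘ₗ adjTau)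

@[simp] lemma PhiL0_tmul (x1 x2 y11 y12 y2 : H) :
    Hh.PhiL0 b ((x1 ⊗ₜ[k] x2) ⊗ₜ[k] ((y11 ⊗ₜ[k] y12) ⊗ₜ[k] y2))
      = Hh.au y12 ⊗ₜ[k]
          Hh.mul (Hh.mul (Hh.mul (Hh.S x1) (Hh.au.symm b)) (Hh.au x2))
            (Hh.mul (Hh.au (Hh.au (Hh.S y11))) (Hh.au y2)) := by
  simp [PhiL0]

noncomputable def PhiL1 : H ⊗[k] (H ⊗[k] ((H ⊗[k] H) ⊗[k] H)) →ₗ[k] H ⊗[k] H :=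
  Hh.sw ∘ₗ (TensorProduct.map
      (Hh.mu ∘ₗ TensorProduct.map (Hh.mul.flip (Hh.au.symm b) ∘ₗ Hh.S ∘ₗ Hh.A') Hh.A)
      ((TensorProduct.map (Hh.A ∘ₗ Hh.A)
          (Hh.mu ∘ₗ TensorProduct.map (Hh.A ∘ₗ Hh.A ∘ₗ Hh.A ∘ₗ Hh.S) (Hh.A ∘ₗ Hh.A))) ∘ₗ adjTau))
    ∘ₗ (TensorProduct.assoc k H H ((H ⊗[k] H) ⊗[k] H)).symm.toLinearMap

@[simp] lemma PhiL1_tmul (x u v11 v12 v2 : H) :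
    Hh.PhiL1 b (x ⊗ₜ[k] (u ⊗ₜ[k] ((v11 ⊗ₜ[k] v12) ⊗ₜ[k] v2)))
      = Hh.au (Hh.au v12) ⊗ₜ[k]
          Hh.mul (Hh.mul (Hh.mul (Hh.S (Hh.au.symm x)) (Hh.au.symm b)) (Hh.au u))
            (Hh.mul (Hh.au (Hh.au (Hh.au (Hh.S v11)))) (Hh.au (Hh.au v2))) := by
  simp [PhiL1]

noncomputable def PhiL2 : H ⊗[k] ((H ⊗[k] (H ⊗[k] H)) ⊗[k] H) →ₗ[k] H ⊗[k] H :=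
  Hh.sw ∘ₗ (TensorProduct.map
      (Hh.mu ∘ₗ TensorProduct.map (Hh.mul.flip (Hh.au.symm b) ∘ₗ Hh.S ∘ₗ Hh.A') (Hh.A ∘ₗ Hh.A))
      ((TensorProduct.map (Hh.A ∘ₗ Hh.A)
          (Hh.mu ∘ₗ TensorProduct.map (Hh.A ∘ₗ Hh.A ∘ₗ Hh.A ∘ₗ Hh.S) Hh.A)) ∘ₗ adjTau))
    ∘ₗ (TensorProduct.assoc k H H ((H ⊗[k] H) ⊗[k] H)).symm.toLinearMap
    ∘ₗ (lTensor H (TensorProduct.assoc k H (H ⊗[k] H) H).toLinearMap)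

@[simp] lemma PhiL2_tmul (x u1 v1 v2 w : H) :
    Hh.PhiL2 b (x ⊗ₜ[k] ((u1 ⊗ₜ[k] (v1 ⊗ₜ[k] v2)) ⊗ₜ[k] w))
      = Hh.au (Hh.au v2) ⊗ₜ[k]
          Hh.mul (Hh.mul (Hh.mul (Hh.S (Hh.au.symm x)) (Hh.au.symm b)) (Hh.au (Hh.au u1)))
            (Hh.mul (Hh.au (Hh.au (Hh.au (Hh.S v1)))) (Hh.au w)) := by
  simp [PhiL2]

noncomputable def PhiL3 : H ⊗[k] (((H ⊗[k] H) ⊗[k] H) ⊗[k] H) →ₗ[k] H ⊗[k] H :=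
  Hh.sw ∘ₗ (TensorProduct.map
      (Hh.mu ∘ₗ TensorProduct.map (Hh.mul.flip (Hh.au.symm b) ∘ₗ Hh.S ∘ₗ Hh.A') (Hh.A ∘ₗ Hh.A ∘ₗ Hh.A))
      (TensorProduct.map Hh.A (Hh.mu ∘ₗ TensorProduct.map (Hh.A ∘ₗ Hh.A ∘ₗ Hh.A ∘ₗ Hh.S) Hh.A)))
    ∘ₗ (TensorProduct.assoc k H H (H ⊗[k] (H ⊗[k] H))).symm.toLinearMap
    ∘ₗ (lTensor H ((lTensor H adjSw12)
          ∘ₗ (TensorProduct.assoc k H H (H ⊗[k] H)).toLinearMap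
          ∘ₗ (TensorProduct.assoc k (H ⊗[k] H) H H).toLinearMap))

@[simp] lemma PhiL3_tmul (x w1 w2 v y : H) :
    Hh.PhiL3 b (x ⊗ₜ[k] (((w1 ⊗ₜ[k] w2) ⊗ₜ[k] v) ⊗ₜ[k] y))
      = Hh.au v ⊗ₜ[k]
          Hh.mul (Hh.mul (Hh.mul (Hh.S (Hh.au.symm x)) (Hh.au.symm b)) (Hh.au (Hh.au (Hh.au w1))))
            (Hh.mul (Hh.au (Hh.au (Hh.au (Hh.S w2)))) (Hh.au y)) := by
  simp [PhiL3]

noncomputable def PhiL5 : H ⊗[k] (H ⊗[k] H) →ₗ[k] H ⊗[k] H :=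
  Hh.sw ∘ₗ TensorProduct.map (Hh.mul.flip b ∘ₗ Hh.S) (TensorProduct.map LinearMap.id (Hh.A ∘ₗ Hh.A))

@[simp] lemma PhiL5_tmul (x u y : H) :
    Hh.PhiL5 b (x ⊗ₜ[k] (u ⊗ₜ[k] y))
      = u ⊗ₜ[k] Hh.mul (Hh.mul (Hh.S x) b) (Hh.au (Hh.au y)) := by
  simp [PhiL5]

noncomputable def PhiC : (H ⊗[k] H) ⊗[k] H →ₗ[k] H ⊗[k] H :=
  Hh.sw ∘ₗ TensorProduct.map (Hh.A ∘ₗ Hh.A ∘ₗ Hh.S) (lTensor H (Hh.mul b))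
    ∘ₗ (TensorProduct.assoc k H H H).toLinearMap

@[simp] lemma PhiC_tmul (x1 x2 y : H) :
    Hh.PhiC b ((x1 ⊗ₜ[k] x2) ⊗ₜ[k] y)
      = x2 ⊗ₜ[k] Hh.mul (Hh.au (Hh.au (Hh.S x1))) (Hh.mul b y) := by
  simp [PhiC]

noncomputable def PhiR0 : ((H ⊗[k] H) ⊗[k] H) ⊗[k] (H ⊗[k] H) →ₗ[k] H ⊗[k] H :=
  (lTensor H Hh.mu) ∘ₗ (TensorProduct.assoc k H H H).toLinearMap
    ∘ₗ TensorProduct.map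
        ((TensorProduct.map Hh.A (Hh.mu ∘ₗ TensorProduct.map (Hh.A ∘ₗ Hh.A ∘ₗ Hh.S) Hh.A)) ∘ₗ adjTau)
        (Hh.mu ∘ₗ TensorProduct.map (Hh.mul.flip (Hh.au.symm b) ∘ₗ Hh.S) Hh.A)

@[simp] lemma PhiR0_tmul (x11 x12 x2 y1 y2 : H) :
    Hh.PhiR0 b (((x11 ⊗ₜ[k] x12) ⊗ₜ[k] x2) ⊗ₜ[k] (y1 ⊗ₜ[k] y2))
      = Hh.au x12 ⊗ₜ[k]
          Hh.mul (Hh.mul (Hh.au (Hh.au (Hh.S x11))) (Hh.au x2))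
            (Hh.mul (Hh.mul (Hh.S y1) (Hh.au.symm b)) (Hh.au y2)) := by
  simp [PhiR0]

noncomputable def PhiR1 : (H ⊗[k] H) ⊗[k] (H ⊗[k] (H ⊗[k] H)) →ₗ[k] H ⊗[k] H :=
  (lTensor H (Hh.mu
      ∘ₗ TensorProduct.map (Hh.mu ∘ₗ TensorProduct.map (Hh.A ∘ₗ Hh.S) Hh.A)
          (Hh.mu ∘ₗ TensorProduct.map (Hh.mul.flip (Hh.au.symm b) ∘ₗ Hh.A ∘ₗ Hh.S) (Hh.A ∘ₗ Hh.A))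
      ∘ₗ (TensorProduct.assoc k H H (H ⊗[k] H)).symm.toLinearMap))
    ∘ₗ (TensorProduct.assoc k H H (H ⊗[k] (H ⊗[k] H))).toLinearMap
    ∘ₗ (rTensor (H ⊗[k] (H ⊗[k] H)) (TensorProduct.comm k H H).toLinearMap)

@[simp] lemma PhiR1_tmul (x1 x2 u v1 v2 : H) :
    Hh.PhiR1 b ((x1 ⊗ₜ[k] x2) ⊗ₜ[k] (u ⊗ₜ[k] (v1 ⊗ₜ[k] v2)))
      = x2 ⊗ₜ[k]
          Hh.mul (Hh.mul (Hh.au (Hh.S x1)) (Hh.au u))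
            (Hh.mul (Hh.mul (Hh.au (Hh.S v1)) (Hh.au.symm b)) (Hh.au (Hh.au v2))) := by
  simp [PhiR1]

noncomputable def PhiR2 : (H ⊗[k] H) ⊗[k] ((H ⊗[k] H) ⊗[k] H) →ₗ[k] H ⊗[k] H :=
  (lTensor H (Hh.mu
      ∘ₗ TensorProduct.map (Hh.mu ∘ₗ TensorProduct.map (Hh.A ∘ₗ Hh.S) (Hh.A ∘ₗ Hh.A))
          (Hh.mu ∘ₗ TensorProduct.map (Hh.mul.flip (Hh.au.symm b) ∘ₗ Hh.A ∘ₗ Hh.S) Hh.A)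
      ∘ₗ (TensorProduct.assoc k H H (H ⊗[k] H)).symm.toLinearMap
      ∘ₗ (lTensor H (TensorProduct.assoc k H H H).toLinearMap)))
    ∘ₗ (TensorProduct.assoc k H H ((H ⊗[k] H) ⊗[k] H)).toLinearMap
    ∘ₗ (rTensor ((H ⊗[k] H) ⊗[k] H) (TensorProduct.comm k H H).toLinearMap)

@[simp] lemma PhiR2_tmul (x1 x2 v1 v2 w : H) :
    Hh.PhiR2 b ((x1 ⊗ₜ[k] x2) ⊗ₜ[k] ((v1 ⊗ₜ[k] v2) ⊗ₜ[k] w))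
      = x2 ⊗ₜ[k]
          Hh.mul (Hh.mul (Hh.au (Hh.S x1)) (Hh.au (Hh.au v1)))
            (Hh.mul (Hh.mul (Hh.au (Hh.S v2)) (Hh.au.symm b)) (Hh.au w)) := by
  simp [PhiR2]

end HomHopf

end AdjProofAux2
section AdjProofAux3

variable {k : Type*} [Field k] {H : Type*} [AddCommGroup H] [Module k H]

namespace HomHopf

variable (Hh : HomHopf k H)

lemma rcomul_au (v : H) :
    (rTensor H Hh.comul) (Hh.comul (Hh.au v))
      = (TensorProduct.map (TensorProduct.map Hh.A Hh.A) Hh.A)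
          ((rTensor H Hh.comul) (Hh.comul v)) := by
  rw [Hh.comul_au]
  generalize Hh.comul v = t
  induction t using TensorProduct.induction_on with
  | zero => simp
  | tmul p q => simp [Hh.comul_au, A]
  | add u v hu hv => simp [map_add, hu, hv]

lemma act_eval (x c : H) :
    adAct Hh.au Hh.mul Hh.comul Hh.S x c
      = Hh.mu ((TensorProduct.map (Hh.mul.flip (Hh.au.symm c) ∘ₗ Hh.S) Hh.A) (Hh.comul x)) := by
  simp only [adAct, adActT, TensorProduct.curry_apply, coe_comp, Function.comp_apply,
    rTensor_tmul]
  generalize Hh.comul x = t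
  induction t using TensorProduct.induction_on with
  | zero => simp
  | tmul p q => simp [mu]
  | add u v hu hv =>
      simp only [map_add, add_tmul, LinearEquiv.map_add, hu, hv]

/-- `Σ (X α³(w₁))(α³(S w₂) Y) = ε(w) α(XY)` -/
lemma cancel1 (X Y w : H) :
    Hh.mu ((TensorProduct.map (Hh.mul X ∘ₗ (Hh.A ∘ₗ Hh.A ∘ₗ Hh.A))
        (Hh.mul.flip Y ∘ₗ ((Hh.A ∘ₗ Hh.A ∘ₗ Hh.A) ∘ₗ Hh.S))) (Hh.comul w))
      = Hh.counit w • Hh.au (Hh.mul X Y) := by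
  have key : ∀ t : H ⊗[k] H,
      Hh.mu ((TensorProduct.map (Hh.mul X ∘ₗ (Hh.A ∘ₗ Hh.A ∘ₗ Hh.A))
          (Hh.mul.flip Y ∘ₗ ((Hh.A ∘ₗ Hh.A ∘ₗ Hh.A) ∘ₗ Hh.S))) t)
        = Hh.mul (Hh.mul X (Hh.au (Hh.au
            (TensorProduct.lift Hh.mul ((TensorProduct.map LinearMap.id Hh.S) t))))) (Hh.au Y) := by
    intro t
    induction t using TensorProduct.induction_on with
    | zero => simp
    | tmul w1 w2 =>
        simp only [map_tmul, mu_tmul, coe_comp, Function.comp_apply, A_apply, flip_apply,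
          LinearEquiv.coe_coe, lift.tmul, LinearMap.id_coe, id_eq]
        calc Hh.mul (Hh.mul X (Hh.au (Hh.au (Hh.au w1))))
              (Hh.mul (Hh.au (Hh.au (Hh.au (Hh.S w2)))) Y)
            = Hh.mul (Hh.au (Hh.mul (Hh.au.symm X) (Hh.au (Hh.au w1))))
              (Hh.mul (Hh.au (Hh.au (Hh.au (Hh.S w2)))) Y) := by
              rw [Hh.au_mul, LinearEquiv.apply_symm_apply]
          _ = Hh.mul (Hh.mul (Hh.mul (Hh.au.symm X) (Hh.au (Hh.au w1)))
              (Hh.au (Hh.au (Hh.au (Hh.S w2))))) (Hh.au Y) :=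
              Hh.hom_assoc _ _ _
          _ = Hh.mul (Hh.mul (Hh.au (Hh.au.symm X))
              (Hh.mul (Hh.au (Hh.au w1)) (Hh.au (Hh.au (Hh.S w2))))) (Hh.au Y) := by
              rw [Hh.hom_assoc]
          _ = Hh.mul (Hh.mul X (Hh.au (Hh.au (Hh.mul w1 (Hh.S w2))))) (Hh.au Y) := by
              rw [LinearEquiv.apply_symm_apply, Hh.au_mul, Hh.au_mul]
    | add u v hu hv =>
        simp only [map_add, LinearEquiv.map_add, LinearMap.map_add, LinearMap.add_apply, hu, hv]
  rw [key, Hh.id_mul_S]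
  simp only [LinearEquiv.map_smul, Hh.au_one, LinearMap.map_smul, Hh.mul_one',
    LinearMap.smul_apply]
  rw [← Hh.au_mul]

/-- `Σ (X α²(w₁))((α(S w₂) c) Y) = ε(w) α(X (c α⁻¹(Y)))` -/
lemma cancel2 (X c Y w : H) :
    Hh.mu ((TensorProduct.map (Hh.mul X ∘ₗ (Hh.A ∘ₗ Hh.A))
        (Hh.mul.flip Y ∘ₗ Hh.mul.flip c ∘ₗ Hh.A ∘ₗ Hh.S)) (Hh.comul w))
      = Hh.counit w • Hh.au (Hh.mul X (Hh.mul c (Hh.au.symm Y))) := by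
  have key : ∀ t : H ⊗[k] H,
      Hh.mu ((TensorProduct.map (Hh.mul X ∘ₗ (Hh.A ∘ₗ Hh.A))
          (Hh.mul.flip Y ∘ₗ Hh.mul.flip c ∘ₗ Hh.A ∘ₗ Hh.S)) t)
        = Hh.mul (Hh.mul X (Hh.au
            (TensorProduct.lift Hh.mul ((TensorProduct.map LinearMap.id Hh.S) t))))
            (Hh.au (Hh.mul c (Hh.au.symm Y))) := by
    intro t
    induction t using TensorProduct.induction_on with
    | zero => simp
    | tmul w1 w2 =>
        simp only [map_tmul, mu_tmul, coe_comp, Function.comp_apply, A_apply, flip_apply,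
          LinearEquiv.coe_coe, lift.tmul, LinearMap.id_coe, id_eq]
        calc Hh.mul (Hh.mul X (Hh.au (Hh.au w1)))
              (Hh.mul (Hh.mul (Hh.au (Hh.S w2)) c) Y)
            = Hh.mul (Hh.mul X (Hh.au (Hh.au w1)))
              (Hh.mul (Hh.mul (Hh.au (Hh.S w2)) c) (Hh.au (Hh.au.symm Y))) := by
              rw [LinearEquiv.apply_symm_apply]
          _ = Hh.mul (Hh.mul X (Hh.au (Hh.au w1)))
              (Hh.mul (Hh.au (Hh.au (Hh.S w2))) (Hh.mul c (Hh.au.symm Y))) := by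
              rw [← Hh.hom_assoc]
          _ = Hh.mul (Hh.au (Hh.mul (Hh.au.symm X) (Hh.au w1)))
              (Hh.mul (Hh.au (Hh.au (Hh.S w2))) (Hh.mul c (Hh.au.symm Y))) := by
              rw [Hh.au_mul, LinearEquiv.apply_symm_apply]
          _ = Hh.mul (Hh.mul (Hh.mul (Hh.au.symm X) (Hh.au w1)) (Hh.au (Hh.au (Hh.S w2))))
              (Hh.au (Hh.mul c (Hh.au.symm Y))) := Hh.hom_assoc _ _ _
          _ = Hh.mul (Hh.mul (Hh.au (Hh.au.symm X)) (Hh.au (Hh.mul w1 (Hh.S w2))))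
              (Hh.au (Hh.mul c (Hh.au.symm Y))) := by
              rw [← Hh.hom_assoc (Hh.au.symm X) (Hh.au w1) (Hh.au (Hh.S w2)), ← Hh.au_mul w1 (Hh.S w2)]
          _ = Hh.mul (Hh.mul X (Hh.au (Hh.mul w1 (Hh.S w2))))
              (Hh.au (Hh.mul c (Hh.au.symm Y))) := by
              rw [LinearEquiv.apply_symm_apply]
    | add u v hu hv =>
        simp only [map_add, LinearEquiv.map_add, LinearMap.map_add, LinearMap.add_apply, hu, hv]
  rw [key, Hh.id_mul_S]
  simp only [LinearEquiv.map_smul, Hh.au_one, LinearMap.map_smul, Hh.mul_one',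
    LinearMap.smul_apply]
  rw [← Hh.au_mul]

end HomHopf

end AdjProofAux3
section AdjProofAux4

variable {k : Type*} [Field k] {H : Type*} [AddCommGroup H] [Module k H]

namespace HomHopf

variable (Hh : HomHopf k H) (b : H)

lemma step0L (t : H ⊗[k] H) :
    ((LinearMap.lTensor H
        ((TensorProduct.lift (Hh.mul ∘ₗ (adAct Hh.au Hh.mul Hh.comul Hh.S).flip b))
          ∘ₗ (LinearMap.lTensor H (Hh.au.toLinearMap ∘ₗ Hh.au.toLinearMap))))
      ∘ₗ (TensorProduct.assoc k H H H).toLinearMap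
      ∘ₗ (LinearMap.rTensor H (TensorProduct.comm k H H).toLinearMap)
      ∘ₗ (TensorProduct.assoc k H H H).symm.toLinearMap
      ∘ₗ (LinearMap.lTensor H (adCoact Hh.au Hh.mul Hh.comul Hh.S))) t
    = Hh.PhiL0 b ((TensorProduct.map Hh.comul ((rTensor H Hh.comul) ∘ₗ Hh.comul)) t) := by
  induction t using TensorProduct.induction_on with
  | zero => simp
  | add u v hu hv => simp only [map_add, hu, hv]
  | tmul x y =>
    simp only [coe_comp, Function.comp_apply, lTensor_tmul, map_tmul, adCoact]
    generalize (rTensor H Hh.comul) (Hh.comul y) = w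
    induction w using TensorProduct.induction_on with
    | zero => simp
    | add u v hu hv =>
        simp only [map_add, add_tmul, tmul_add, LinearEquiv.map_add, LinearMap.map_add, hu, hv]
    | tmul s r =>
      induction s using TensorProduct.induction_on with
      | zero => simp
      | add u v hu hv =>
          simp only [map_add, add_tmul, tmul_add, LinearEquiv.map_add, LinearMap.map_add, hu, hv]
      | tmul p q =>
        simp only [map_tmul, rTensor_tmul, comm_tmul, assoc_tmul, assoc_symm_tmul,
          lTensor_tmul, lift.tmul, coe_comp, Function.comp_apply, LinearEquiv.coe_coe,
          flip_apply, A_apply, A'_apply, LinearMap.id_coe, id_eq]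
        rw [Hh.act_eval]
        generalize Hh.comul x = u
        induction u using TensorProduct.induction_on with
        | zero => simp
        | add u v hu hv =>
            simp only [map_add, add_tmul, tmul_add, LinearEquiv.map_add, LinearMap.map_add,
              LinearMap.add_apply, hu, hv]
        | tmul x1 x2 =>
          simp only [map_tmul, mu_tmul, PhiL0_tmul, coe_comp, Function.comp_apply,
            flip_apply, A_apply, LinearEquiv.coe_coe, Hh.au_mul,
            LinearEquiv.apply_symm_apply]

end HomHopf

end AdjProofAux4

section AdjProofAux4R

variable {k : Type*} [Field k] {H : Type*} [AddCommGroup H] [Module k H]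

namespace HomHopf

variable (Hh : HomHopf k H) (b : H)

lemma step0R (t : H ⊗[k] H) :
    ((LinearMap.lTensor H
        ((TensorProduct.lift (Hh.mul ∘ₗ (Hh.au.toLinearMap ∘ₗ Hh.au.toLinearMap)))
          ∘ₗ (LinearMap.lTensor H ((adAct Hh.au Hh.mul Hh.comul Hh.S).flip b))))
      ∘ₗ (TensorProduct.assoc k H H H).toLinearMap
      ∘ₗ (LinearMap.rTensor H (adCoact Hh.au Hh.mul Hh.comul Hh.S))) t
    = Hh.PhiR0 b ((TensorProduct.map ((rTensor H Hh.comul) ∘ₗ Hh.comul) Hh.comul) t) := by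
  induction t using TensorProduct.induction_on with
  | zero => simp
  | add u v hu hv => simp only [map_add, hu, hv]
  | tmul x y =>
    simp only [coe_comp, Function.comp_apply, rTensor_tmul, map_tmul, adCoact]
    generalize (rTensor H Hh.comul) (Hh.comul x) = w
    induction w using TensorProduct.induction_on with
    | zero => simp
    | add u v hu hv =>
        simp only [map_add, add_tmul, tmul_add, LinearEquiv.map_add, LinearMap.map_add, hu, hv]
    | tmul s r =>
      induction s using TensorProduct.induction_on with
      | zero => simp
      | add u v hu hv =>
          simp only [map_add, add_tmul, tmul_add, LinearEquiv.map_add, LinearMap.map_add, hu, hv]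
      | tmul p q =>
        simp only [map_tmul, rTensor_tmul, comm_tmul, assoc_tmul, assoc_symm_tmul,
          lTensor_tmul, lift.tmul, coe_comp, Function.comp_apply, LinearEquiv.coe_coe,
          flip_apply, A_apply, A'_apply, LinearMap.id_coe, id_eq]
        rw [Hh.act_eval]
        generalize Hh.comul y = u
        induction u using TensorProduct.induction_on with
        | zero => simp
        | add u v hu hv =>
            simp only [map_add, add_tmul, tmul_add, LinearEquiv.map_add, LinearMap.map_add,
              LinearMap.add_apply, hu, hv]
        | tmul y1 y2 =>
          simp only [map_tmul, mu_tmul, PhiR0_tmul, coe_comp, Function.comp_apply,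
            flip_apply, A_apply, LinearEquiv.coe_coe, Hh.au_mul,
            LinearEquiv.apply_symm_apply]

end HomHopf

end AdjProofAux4R
section AdjProofAux5

variable {k : Type*} [Field k] {H : Type*} [AddCommGroup H] [Module k H]

namespace HomHopf

variable (Hh : HomHopf k H) (b : H)

lemma step1 (h : H) :
    Hh.PhiL0 b ((TensorProduct.map Hh.comul ((rTensor H Hh.comul) ∘ₗ Hh.comul)) (Hh.comul h))
    = Hh.PhiL1 b ((lTensor H ((lTensor H ((rTensor H Hh.comul) ∘ₗ Hh.comul)) ∘ₗ Hh.comul))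
        (Hh.comul h)) := by
  have hQ : ∀ t : H ⊗[k] H,
      (TensorProduct.map Hh.comul ((rTensor H Hh.comul) ∘ₗ Hh.comul)) t
        = (TensorProduct.map LinearMap.id ((rTensor H Hh.comul) ∘ₗ Hh.comul))
            ((rTensor H Hh.comul) t) := by
    intro t
    induction t using TensorProduct.induction_on with
    | zero => simp
    | tmul x y => simp
    | add u v hu hv => simp only [map_add, hu, hv]
  have hR : (lTensor H ((lTensor H ((rTensor H Hh.comul) ∘ₗ Hh.comul)) ∘ₗ Hh.comul))
        (Hh.comul h)
      = (lTensor H (lTensor H ((rTensor H Hh.comul) ∘ₗ Hh.comul)))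
          ((lTensor H Hh.comul) (Hh.comul h)) := by
    rw [lTensor_comp, coe_comp, Function.comp_apply]
  rw [hQ, Hh.coassocR, hR]
  generalize (lTensor H Hh.comul) (Hh.comul h) = t
  induction t using TensorProduct.induction_on with
  | zero => simp
  | add u v hu hv => simp only [map_add, LinearEquiv.map_add, hu, hv]
  | tmul x s =>
    induction s using TensorProduct.induction_on with
    | zero => simp
    | add u v hu hv =>
        simp only [map_add, tmul_add, add_tmul, LinearEquiv.map_add, LinearMap.map_add, hu, hv]
    | tmul u v =>
      simp only [map_tmul, assoc_symm_tmul, lTensor_tmul, coe_comp, Function.comp_apply,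
        A_apply, A'_apply, LinearMap.id_coe, id_eq, LinearEquiv.coe_coe]
      rw [Hh.rcomul_au]
      generalize (rTensor H Hh.comul) (Hh.comul v) = w
      induction w using TensorProduct.induction_on with
      | zero => simp
      | add u' v' hu hv =>
          simp only [map_add, tmul_add, add_tmul, LinearEquiv.map_add, LinearMap.map_add, hu, hv]
      | tmul s' e =>
        induction s' using TensorProduct.induction_on with
        | zero => simp
        | add u' v' hu hv =>
            simp only [map_add, tmul_add, add_tmul, LinearEquiv.map_add, LinearMap.map_add,
              hu, hv]
        | tmul c d =>
          simp only [map_tmul, PhiL0_tmul, PhiL1_tmul, A_apply, LinearEquiv.coe_coe,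
            S_au_apply, LinearMap.id_coe, id_eq]

end HomHopf

end AdjProofAux5

section AdjProofAux5b

variable {k : Type*} [Field k] {H : Type*} [AddCommGroup H] [Module k H]

namespace HomHopf

variable (Hh : HomHopf k H) (b : H)

lemma step2 (t : H ⊗[k] H) :
    Hh.PhiL1 b ((lTensor H ((lTensor H ((rTensor H Hh.comul) ∘ₗ Hh.comul)) ∘ₗ Hh.comul)) t)
    = Hh.PhiL2 b ((lTensor H ((rTensor H ((lTensor H Hh.comul) ∘ₗ Hh.comul)) ∘ₗ Hh.comul)) t) := by
  induction t using TensorProduct.induction_on with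
  | zero => simp
  | add u v hu hv => simp only [map_add, hu, hv]
  | tmul x y =>
    have e1 : (lTensor H ((rTensor H Hh.comul) ∘ₗ Hh.comul)) (Hh.comul y)
        = (lTensor H (rTensor H Hh.comul)) ((lTensor H Hh.comul) (Hh.comul y)) := by
      rw [lTensor_comp, coe_comp, Function.comp_apply]
    have e2 : (rTensor H ((lTensor H Hh.comul) ∘ₗ Hh.comul)) (Hh.comul y)
        = (rTensor H (lTensor H Hh.comul)) ((rTensor H Hh.comul) (Hh.comul y)) := by
      rw [rTensor_comp, coe_comp, Function.comp_apply]
    simp only [lTensor_tmul, coe_comp, Function.comp_apply]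
    rw [e1, e2, Hh.coassocL]
    generalize (rTensor H Hh.comul) (Hh.comul y) = w
    induction w using TensorProduct.induction_on with
    | zero => simp
    | add u' v' hu hv =>
        simp only [map_add, tmul_add, add_tmul, LinearEquiv.map_add, LinearMap.map_add, hu, hv]
    | tmul s' r =>
      induction s' using TensorProduct.induction_on with
      | zero => simp
      | add u' v' hu hv =>
          simp only [map_add, tmul_add, add_tmul, LinearEquiv.map_add, LinearMap.map_add,
            hu, hv]
      | tmul p q =>
        simp only [map_tmul, assoc_tmul, lTensor_tmul, rTensor_tmul, coe_comp,
          Function.comp_apply, A_apply, A'_apply, LinearMap.id_coe, id_eq,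
          LinearEquiv.coe_coe]
        generalize Hh.comul q = s2
        induction s2 using TensorProduct.induction_on with
        | zero => simp
        | add u' v' hu hv =>
            simp only [map_add, tmul_add, add_tmul, LinearEquiv.map_add, LinearMap.map_add,
              hu, hv]
        | tmul c d =>
          simp only [PhiL1_tmul, PhiL2_tmul, LinearEquiv.apply_symm_apply]

lemma step3 (t : H ⊗[k] H) :
    Hh.PhiL2 b ((lTensor H ((rTensor H ((lTensor H Hh.comul) ∘ₗ Hh.comul)) ∘ₗ Hh.comul)) t)
    = Hh.PhiL3 b ((lTensor H ((rTensor H ((rTensor H Hh.comul) ∘ₗ Hh.comul)) ∘ₗ Hh.comul)) t) := by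
  induction t using TensorProduct.induction_on with
  | zero => simp
  | add u v hu hv => simp only [map_add, hu, hv]
  | tmul x y =>
    simp only [lTensor_tmul, coe_comp, Function.comp_apply]
    generalize Hh.comul y = s
    induction s using TensorProduct.induction_on with
    | zero => simp
    | add u v hu hv =>
        simp only [map_add, tmul_add, add_tmul, LinearEquiv.map_add, LinearMap.map_add, hu, hv]
    | tmul u v =>
      simp only [rTensor_tmul, coe_comp, Function.comp_apply]
      rw [Hh.coassocL]
      generalize (rTensor H Hh.comul) (Hh.comul u) = w
      induction w using TensorProduct.induction_on with
      | zero => simp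
      | add u' v' hu hv =>
          simp only [map_add, tmul_add, add_tmul, LinearEquiv.map_add, LinearMap.map_add,
            hu, hv]
      | tmul s' e =>
        induction s' using TensorProduct.induction_on with
        | zero => simp
        | add u' v' hu hv =>
            simp only [map_add, tmul_add, add_tmul, LinearEquiv.map_add, LinearMap.map_add,
              hu, hv]
        | tmul c d =>
          simp only [map_tmul, assoc_tmul, lTensor_tmul, coe_comp, Function.comp_apply,
            A_apply, A'_apply, LinearMap.id_coe, id_eq, LinearEquiv.coe_coe,
            PhiL2_tmul, PhiL3_tmul, LinearEquiv.apply_symm_apply]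

end HomHopf

end AdjProofAux5b
section AdjProofAux6

variable {k : Type*} [Field k] {H : Type*} [AddCommGroup H] [Module k H]

namespace HomHopf

variable (Hh : HomHopf k H) (b : H)

lemma step4 (t : H ⊗[k] H) :
    Hh.PhiL3 b ((lTensor H ((rTensor H ((rTensor H Hh.comul) ∘ₗ Hh.comul)) ∘ₗ Hh.comul)) t)
    = Hh.PhiL5 b ((lTensor H Hh.comul) t) := by
  induction t using TensorProduct.induction_on with
  | zero => simp
  | add u v hu hv => simp only [map_add, hu, hv]
  | tmul x y =>
    simp only [lTensor_tmul, coe_comp, Function.comp_apply]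
    generalize Hh.comul y = s
    induction s using TensorProduct.induction_on with
    | zero => simp
    | add u v hu hv =>
        simp only [map_add, tmul_add, add_tmul, LinearEquiv.map_add, LinearMap.map_add, hu, hv]
    | tmul u v =>
      simp only [rTensor_tmul, coe_comp, Function.comp_apply]
      have keyc : ∀ s₂ : H ⊗[k] H,
          Hh.PhiL3 b (x ⊗ₜ[k] (((rTensor H Hh.comul) s₂) ⊗ₜ[k] v))
            = Hh.au ((TensorProduct.lid k H) ((TensorProduct.map Hh.counit LinearMap.id) s₂))
                ⊗ₜ[k] Hh.au (Hh.mul (Hh.mul (Hh.S (Hh.au.symm x)) (Hh.au.symm b)) (Hh.au v)) := by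
        intro s₂
        induction s₂ using TensorProduct.induction_on with
        | zero => simp
        | add u' v' hu hv =>
            simp only [map_add, tmul_add, add_tmul, LinearEquiv.map_add, LinearMap.map_add,
              hu, hv]
        | tmul p q =>
          have aux2 : ∀ s₃ : H ⊗[k] H,
              Hh.PhiL3 b (x ⊗ₜ[k] ((s₃ ⊗ₜ[k] q) ⊗ₜ[k] v))
                = Hh.au q ⊗ₜ[k] Hh.mu ((TensorProduct.map
                    (Hh.mul (Hh.mul (Hh.S (Hh.au.symm x)) (Hh.au.symm b)) ∘ₗ (Hh.A ∘ₗ Hh.A ∘ₗ Hh.A))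
                    (Hh.mul.flip (Hh.au v) ∘ₗ ((Hh.A ∘ₗ Hh.A ∘ₗ Hh.A) ∘ₗ Hh.S))) s₃) := by
            intro s₃
            induction s₃ using TensorProduct.induction_on with
            | zero => simp
            | add u' v' hu hv =>
                simp only [map_add, tmul_add, add_tmul, LinearEquiv.map_add,
                  LinearMap.map_add, hu, hv]
            | tmul w1 w2 =>
              simp only [PhiL3_tmul, map_tmul, mu_tmul, coe_comp, Function.comp_apply,
                A_apply, flip_apply, LinearEquiv.coe_coe]
          rw [rTensor_tmul, aux2, Hh.cancel1]
          simp only [map_tmul, lid_tmul, LinearMap.id_coe, id_eq, tmul_smul, smul_tmul',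
            LinearEquiv.map_smul]
      rw [keyc, Hh.counit_comul, LinearEquiv.apply_symm_apply, PhiL5_tmul]
      congr 1
      rw [Hh.au_mul, Hh.au_mul, LinearEquiv.apply_symm_apply]
      congr 2
      rw [Hh.S_auS_apply, LinearEquiv.apply_symm_apply]

lemma step5 (h : H) :
    Hh.PhiL5 b ((lTensor H Hh.comul) (Hh.comul h))
    = Hh.PhiC b ((rTensor H Hh.comul) (Hh.comul h)) := by
  rw [Hh.coassocL]
  generalize (rTensor H Hh.comul) (Hh.comul h) = w
  induction w using TensorProduct.induction_on with
  | zero => simp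
  | add u v hu hv => simp only [map_add, LinearEquiv.map_add, hu, hv]
  | tmul s e =>
    induction s using TensorProduct.induction_on with
    | zero => simp
    | add u v hu hv =>
        simp only [map_add, tmul_add, add_tmul, LinearEquiv.map_add, LinearMap.map_add, hu, hv]
    | tmul c d =>
      simp only [map_tmul, assoc_tmul, lTensor_tmul, coe_comp, Function.comp_apply,
        A_apply, A'_apply, LinearMap.id_coe, id_eq, LinearEquiv.coe_coe,
        PhiL5_tmul, PhiC_tmul, S_au_apply, LinearEquiv.apply_symm_apply]
      rw [Hh.hom_assoc]

end HomHopf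

end AdjProofAux6
section AdjProofAux7

variable {k : Type*} [Field k] {H : Type*} [AddCommGroup H] [Module k H]

namespace HomHopf

variable (Hh : HomHopf k H) (b : H)

lemma step6 (h : H) :
    Hh.PhiR0 b ((TensorProduct.map ((rTensor H Hh.comul) ∘ₗ Hh.comul) Hh.comul) (Hh.comul h))
    = Hh.PhiR1 b ((TensorProduct.map Hh.comul ((lTensor H Hh.comul) ∘ₗ Hh.comul)) (Hh.comul h)) := by
  have hL : ∀ t : H ⊗[k] H,
      (TensorProduct.map ((rTensor H Hh.comul) ∘ₗ Hh.comul) Hh.comul) t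
        = (TensorProduct.map (rTensor H Hh.comul) Hh.comul) ((rTensor H Hh.comul) t) := by
    intro t
    induction t using TensorProduct.induction_on with
    | zero => simp
    | tmul x y => simp
    | add u v hu hv => simp only [map_add, hu, hv]
  have hR : ∀ t : H ⊗[k] H,
      (TensorProduct.map Hh.comul ((lTensor H Hh.comul) ∘ₗ Hh.comul)) t
        = (TensorProduct.map Hh.comul (lTensor H Hh.comul)) ((lTensor H Hh.comul) t) := by
    intro t
    induction t using TensorProduct.induction_on with
    | zero => simp
    | tmul x y => simp
    | add u v hu hv => simp only [map_add, hu, hv]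
  rw [hL, hR, Hh.coassocR]
  generalize (lTensor H Hh.comul) (Hh.comul h) = t
  induction t using TensorProduct.induction_on with
  | zero => simp
  | add u v hu hv => simp only [map_add, LinearEquiv.map_add, hu, hv]
  | tmul x s =>
    induction s using TensorProduct.induction_on with
    | zero => simp
    | add u v hu hv =>
        simp only [map_add, tmul_add, add_tmul, LinearEquiv.map_add, LinearMap.map_add, hu, hv]
    | tmul u v =>
      simp only [map_tmul, assoc_symm_tmul, rTensor_tmul, lTensor_tmul, coe_comp,
        Function.comp_apply, A_apply, A'_apply, LinearMap.id_coe, id_eq, LinearEquiv.coe_coe]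
      rw [Hh.comul_auS, Hh.comul_au]
      generalize Hh.comul x = s1
      induction s1 using TensorProduct.induction_on with
      | zero => simp
      | add u' v' hu hv =>
          simp only [map_add, tmul_add, add_tmul, LinearEquiv.map_add, LinearMap.map_add,
            hu, hv]
      | tmul a1 a2 =>
        generalize Hh.comul v = s2
        induction s2 using TensorProduct.induction_on with
        | zero => simp
        | add u' v' hu hv =>
            simp only [map_add, tmul_add, add_tmul, LinearEquiv.map_add, LinearMap.map_add,
              hu, hv]
        | tmul c d =>
          simp only [map_tmul, A_apply, A'_apply, LinearEquiv.coe_coe, PhiR0_tmul,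
            PhiR1_tmul, S_au_apply, S_auS_apply, LinearEquiv.apply_symm_apply]

lemma step7 (t : H ⊗[k] H) :
    Hh.PhiR1 b ((TensorProduct.map Hh.comul ((lTensor H Hh.comul) ∘ₗ Hh.comul)) t)
    = Hh.PhiR2 b ((TensorProduct.map Hh.comul ((rTensor H Hh.comul) ∘ₗ Hh.comul)) t) := by
  induction t using TensorProduct.induction_on with
  | zero => simp
  | add u v hu hv => simp only [map_add, hu, hv]
  | tmul x y =>
    simp only [map_tmul, coe_comp, Function.comp_apply]
    rw [Hh.coassocL]
    generalize (rTensor H Hh.comul) (Hh.comul y) = w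
    generalize Hh.comul x = u
    induction u using TensorProduct.induction_on with
    | zero => simp
    | add u' v' hu hv =>
        simp only [map_add, tmul_add, add_tmul, LinearEquiv.map_add, LinearMap.map_add, hu, hv]
    | tmul x1 x2 =>
      induction w using TensorProduct.induction_on with
      | zero => simp
      | add u' v' hu hv =>
          simp only [map_add, tmul_add, add_tmul, LinearEquiv.map_add, LinearMap.map_add,
            hu, hv]
      | tmul s e =>
        induction s using TensorProduct.induction_on with
        | zero => simp
        | add u' v' hu hv =>
            simp only [map_add, tmul_add, add_tmul, LinearEquiv.map_add, LinearMap.map_add,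
              hu, hv]
        | tmul c d =>
          simp only [map_tmul, assoc_tmul, lTensor_tmul, coe_comp, Function.comp_apply,
            A_apply, A'_apply, LinearMap.id_coe, id_eq, LinearEquiv.coe_coe,
            PhiR1_tmul, PhiR2_tmul, LinearEquiv.apply_symm_apply]

lemma step8 (t : H ⊗[k] H) :
    Hh.PhiR2 b ((TensorProduct.map Hh.comul ((rTensor H Hh.comul) ∘ₗ Hh.comul)) t)
    = Hh.PhiC b ((rTensor H Hh.comul) t) := by
  induction t using TensorProduct.induction_on with
  | zero => simp
  | add u v hu hv => simp only [map_add, hu, hv]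
  | tmul x y =>
    simp only [map_tmul, rTensor_tmul, coe_comp, Function.comp_apply]
    generalize Hh.comul x = u
    induction u using TensorProduct.induction_on with
    | zero => simp
    | add u' v' hu hv =>
        simp only [map_add, tmul_add, add_tmul, LinearEquiv.map_add, LinearMap.map_add, hu, hv]
    | tmul x1 x2 =>
      have keyc : ∀ s₂ : H ⊗[k] H,
          Hh.PhiR2 b ((x1 ⊗ₜ[k] x2) ⊗ₜ[k] ((rTensor H Hh.comul) s₂))
            = x2 ⊗ₜ[k] Hh.au (Hh.mul (Hh.au (Hh.S x1))
                (Hh.mul (Hh.au.symm b)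
                  ((TensorProduct.lid k H) ((TensorProduct.map Hh.counit LinearMap.id) s₂)))) := by
        intro s₂
        induction s₂ using TensorProduct.induction_on with
        | zero => simp
        | add u' v' hu hv =>
            simp only [map_add, tmul_add, add_tmul, LinearEquiv.map_add, LinearMap.map_add,
              hu, hv]
        | tmul p q =>
          have aux2 : ∀ s₃ : H ⊗[k] H,
              Hh.PhiR2 b ((x1 ⊗ₜ[k] x2) ⊗ₜ[k] (s₃ ⊗ₜ[k] q))
                = x2 ⊗ₜ[k] Hh.mu ((TensorProduct.map
                    (Hh.mul (Hh.au (Hh.S x1)) ∘ₗ (Hh.A ∘ₗ Hh.A))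
                    (Hh.mul.flip (Hh.au q) ∘ₗ Hh.mul.flip (Hh.au.symm b) ∘ₗ Hh.A ∘ₗ Hh.S)) s₃) := by
            intro s₃
            induction s₃ using TensorProduct.induction_on with
            | zero => simp
            | add u' v' hu hv =>
                simp only [map_add, tmul_add, add_tmul, LinearEquiv.map_add,
                  LinearMap.map_add, hu, hv]
            | tmul v1 v2 =>
              simp only [PhiR2_tmul, map_tmul, mu_tmul, coe_comp, Function.comp_apply,
                A_apply, flip_apply, LinearEquiv.coe_coe]
          rw [rTensor_tmul, aux2, Hh.cancel2]
          simp only [map_tmul, lid_tmul, LinearMap.id_coe, id_eq,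
            LinearMap.map_smul, LinearEquiv.map_smul, tmul_smul, ← smul_tmul',
            LinearEquiv.symm_apply_apply]
      rw [keyc, Hh.counit_comul, PhiC_tmul]
      congr 1
      rw [Hh.au_mul, Hh.au_mul, LinearEquiv.apply_symm_apply, LinearEquiv.apply_symm_apply]

end HomHopf

end AdjProofAux7
/-- For the action `h·b = (S(h₁)α⁻¹(b))α(h₂)` and coaction
`ρ(h) = α(h₁₂) ⊗ S(h₁₁)α⁻¹(h₂)` of Proposition 3.3, the bicrossproduct condition (d)
holds: `Σ h₂₍₀₎ ⊗ (h₁·b)α²(h₂₍₁₎) = Σ h₁₍₀₎ ⊗ α²(h₁₍₁₎)(h₂·b)`. -/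
theorem adjoint_bicross_condD
    {k : Type*} [Field k] {H : Type*} [AddCommGroup H] [Module k H]
    (Hh : HomHopf k H) :
    bicrossCondD Hh.au Hh.mul Hh.au Hh.comul
      (adAct Hh.au Hh.mul Hh.comul Hh.S) (adCoact Hh.au Hh.mul Hh.comul Hh.S) := by
  intro h b
  exact (Hh.step0L b (Hh.comul h)).trans <|
    (Hh.step1 b h).trans <|
    (Hh.step2 b (Hh.comul h)).trans <|
    (Hh.step3 b (Hh.comul h)).trans <|
    (Hh.step4 b (Hh.comul h)).trans <|
    (Hh.step5 b h).trans <|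
    ((Hh.step8 b (Hh.comul h)).symm).trans <|
    ((Hh.step7 b (Hh.comul h)).symm).trans <|
    ((Hh.step6 b h).symm).trans (Hh.step0R b (Hh.comul h)).symm
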